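/- arXiv:2306.12846 — 10 statements merged into one kernel-verified Lean document; each statement's English description precedes it below -/
import Mathlib

section
/- Let V be a complex vector space, 0 ≠ α ∈ V, and let σ, τ : V → V be two reflections with σ·α = τ·α = −α. If there exists m ∈ ℕ, m ≥ 1, such that (στ)^m = id_V, then σ = τ. -/
/-!
Two reflections along the same vector `α` differ from the identity only in the direction of `α`,
so `N := στ - 1` maps `V` into `ℂ α` and kills `α`; hence `N² = 0` and `(στ)^m = 1 + mN`.
In characteristic zero `(στ)^m = 1` forces `N = 0`, i.e. `στ = 1`, and since `σ² = 1` this gives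
`σ = τ`.
-/

open Submodule

theorem one_add_pow_of_mul_self_eq_zero {A : Type*} [Semiring A] {x : A} (hx : x * x = 0) (n : ℕ) :
    (1 + x) ^ n = 1 + n * x := by
  induction n with
  | zero => simp
  | succ n ih =>
    rw [pow_succ, ih]
    calc (1 + n * x) * (1 + x) = 1 + (n + 1) * x + n * (x * x) := by noncomm_ring
      _ = 1 + (n + 1 : ℕ) * x := by rw [hx]; push_cast; simp

theorem eq_zero_of_one_add_pow_eq_one {K A : Type*} [DivisionRing K] [CharZero K] [Ring A]
    [Module K A] {x : A} (hx : x * x = 0) {m : ℕ} (hm : m ≠ 0) (h : (1 + x) ^ m = 1) : x = 0 := by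
  have hmx : (m : K) • x = 0 := by
    rw [Nat.cast_smul_eq_nsmul, nsmul_eq_mul, ← add_eq_left (a := (1 : A)),
      ← one_add_pow_of_mul_self_eq_zero hx, h]
  exact (smul_eq_zero.1 hmx).resolve_left (Nat.cast_ne_zero.2 hm)

section Reflection

variable {R V : Type*} [Ring R] [AddCommGroup V] [Module R V] {α : V} {σ : Module.End R V}
  {H : Submodule R V}

theorem exists_mem_add_smul_of_isCompl_span_singleton (hc : IsCompl H (R ∙ α)) (v : V) :
    ∃ h ∈ H, ∃ c : R, h + c • α = v := by
  obtain ⟨h, hh, _, hs, rfl⟩ := mem_sup.1 (hc.sup_eq_top ▸ mem_top : v ∈ H ⊔ (R ∙ α))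
  obtain ⟨c, rfl⟩ := mem_span_singleton.1 hs
  exact ⟨h, hh, c, rfl⟩

variable (hc : IsCompl H (R ∙ α)) (hfix : ∀ v ∈ H, σ v = v) (hσα : σ α = -α)
include hc hfix hσα

theorem reflection_mul_self : σ * σ = 1 := by
  ext v
  obtain ⟨h, hh, c, rfl⟩ := exists_mem_add_smul_of_isCompl_span_singleton hc v
  simp [hfix h hh, hσα]

theorem reflection_apply_sub_self_mem_span (v : V) : σ v - v ∈ R ∙ α := by
  obtain ⟨h, hh, c, rfl⟩ := exists_mem_add_smul_of_isCompl_span_singleton hc v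
  have : σ (h + c • α) - (h + c • α) = -(c • α) - c • α := by
    rw [map_add, map_smul, hfix h hh, hσα, smul_neg]
    abel
  rw [this]
  exact sub_mem (neg_mem (smul_mem _ c (mem_span_singleton_self α)))
    (smul_mem _ c (mem_span_singleton_self α))

end Reflection

theorem mul_self_eq_zero_of_apply_mem_span_singleton {R V : Type*} [Ring R] [AddCommGroup V]
    [Module R V] {α : V} {N : Module.End R V} (hNα : N α = 0) (hN : ∀ v, N v ∈ R ∙ α) :
    N * N = 0 := by
  ext v
  obtain ⟨c, hc⟩ := mem_span_singleton.1 (hN v)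
  simp [← hc, hNα]

theorem reflection_mul_reflection_sub_one_mul_self {R V : Type*} [Ring R] [AddCommGroup V]
    [Module R V] {α : V} {σ τ : Module.End R V} {Hσ Hτ : Submodule R V}
    (hσc : IsCompl Hσ (R ∙ α)) (hσfix : ∀ v ∈ Hσ, σ v = v) (hσα : σ α = -α)
    (hτc : IsCompl Hτ (R ∙ α)) (hτfix : ∀ v ∈ Hτ, τ v = v) (hτα : τ α = -α) :
    (σ * τ - 1) * (σ * τ - 1) = 0 := by
  refine mul_self_eq_zero_of_apply_mem_span_singleton (α := α) ?_ fun v ↦ ?_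
  · simp [hτα, hσα]
  · have : (σ * τ - 1) v = (σ (τ v) - τ v) + (τ v - v) := by simp
    rw [this]
    exact add_mem (reflection_apply_sub_self_mem_span hσc hσfix hσα _)
      (reflection_apply_sub_self_mem_span hτc hτfix hτα v)

theorem stmt1_general (V : Type*) [AddCommGroup V] [Module ℂ V]
    (α : V) (σ τ : V →ₗ[ℂ] V)
    (Hσ : Submodule ℂ V) (hσc : IsCompl Hσ (Submodule.span ℂ {α}))
    (hσfix : ∀ v ∈ Hσ, σ v = v) (hσα : σ α = -α)
    (Hτ : Submodule ℂ V) (hτc : IsCompl Hτ (Submodule.span ℂ {α}))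
    (hτfix : ∀ v ∈ Hτ, τ v = v) (hτα : τ α = -α)
    (m : ℕ) (hm : 1 ≤ m) (h : (σ ∘ₗ τ) ^ m = LinearMap.id) :
    σ = τ := by
  have hστ : σ * τ = 1 :=
    sub_eq_zero.1 <| eq_zero_of_one_add_pow_eq_one (K := ℂ)
      (reflection_mul_reflection_sub_one_mul_self hσc hσfix hσα hτc hτfix hτα)
      (Nat.one_le_iff_ne_zero.1 hm) (by rwa [add_sub_cancel])
  exact left_inv_eq_right_inv (reflection_mul_self hσc hσfix hσα) hστ

/-- If `σ, τ : V → V` are two reflections with the same reflection vector `α`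
(i.e. each fixes a complementary hyperplane pointwise and sends `α` to `-α`),
and `(στ)^m = id` for some `m ≥ 1`, then `σ = τ`. -/
theorem stmt1 (V : Type*) [AddCommGroup V] [Module ℂ V]
    (α : V) (hα : α ≠ 0) (σ τ : V →ₗ[ℂ] V)
    (Hσ : Submodule ℂ V) (hσc : IsCompl Hσ (Submodule.span ℂ {α}))
    (hσfix : ∀ v ∈ Hσ, σ v = v) (hσα : σ α = -α)
    (Hτ : Submodule ℂ V) (hτc : IsCompl Hτ (Submodule.span ℂ {α}))
    (hτfix : ∀ v ∈ Hτ, τ v = v) (hτα : τ α = -α)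
    (m : ℕ) (hm : 1 ≤ m) (h : (σ ∘ₗ τ) ^ m = LinearMap.id) :
    σ = τ :=
  stmt1_general V α σ τ Hσ hσc hσfix hσα Hτ hτc hτfix hτα m hm h
end

section
/- Let m ≥ 2 and 1 ≤ k < m/2, and let R = [[-1, 2cos(kπ/m)],[0,1]], T = [[1,0],[2cos(kπ/m),-1]]. If B is a complex 2×2 matrix with RᵀBR = B and TᵀBT = B, then B is a complex scalar multiple of the matrix [[1, −cos(kπ/m)],[−cos(kπ/m), 1]]. In particular, every D_m-invariant bilinear form on the representation ρ_k is symmetric and unique up to scalar. -/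
/-!
Writing `B = [[a, b], [d, e]]`, the off-diagonal entries of `RᵀBR = B` give `b = d = -c a` and
those of `TᵀBT = B` give `b = d = -c e`. Hence `c a = c e`, and since `c = cos(kπ/m) ≠ 0`
for `2k < m`, `a = e`, so `B = a • [[1, -c], [-c, 1]]`.
-/

open Matrix

theorem Real.cos_nat_mul_pi_div_pos {k m : ℕ} (h : 2 * k < m) :
    0 < Real.cos (k * Real.pi / m) := by
  have hm : (0 : ℝ) < m := by exact_mod_cast (Nat.zero_le _).trans_lt h
  have h' : 2 * (k : ℝ) < m := by exact_mod_cast h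
  apply Real.cos_pos_of_mem_Ioo
  constructor
  · have : 0 ≤ (k : ℝ) * Real.pi / m := by positivity
    linarith [Real.pi_pos]
  · rw [div_lt_iff₀ hm]
    nlinarith [Real.pi_pos]

namespace Matrix

variable {K : Type*} [CommRing K] [IsDomain K] {c : K} {B : Matrix (Fin 2) (Fin 2) K}

theorem offDiag_eq_of_transpose_mul_mul_upper_reflection (h2 : (2 : K) ≠ 0)
    (h : (!![-1, 2 * c; 0, 1] : Matrix (Fin 2) (Fin 2) K)ᵀ * B * !![-1, 2 * c; 0, 1] = B) :
    B 0 1 = -(c * B 0 0) ∧ B 1 0 = -(c * B 0 0) := by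
  have h01 := congrFun₂ h 0 1
  have h10 := congrFun₂ h 1 0
  simp only [mul_apply, Fin.sum_univ_two, transpose_apply, of_apply, cons_val', cons_val_zero,
    cons_val_one, empty_val', cons_val_fin_one] at h01 h10
  exact ⟨mul_left_cancel₀ h2 (by linear_combination -h01),
    mul_left_cancel₀ h2 (by linear_combination -h10)⟩

theorem offDiag_eq_of_transpose_mul_mul_lower_reflection (h2 : (2 : K) ≠ 0)
    (h : (!![1, 0; 2 * c, -1] : Matrix (Fin 2) (Fin 2) K)ᵀ * B * !![1, 0; 2 * c, -1] = B) :
    B 0 1 = -(c * B 1 1) ∧ B 1 0 = -(c * B 1 1) := by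
  have h01 := congrFun₂ h 0 1
  have h10 := congrFun₂ h 1 0
  simp only [mul_apply, Fin.sum_univ_two, transpose_apply, of_apply, cons_val', cons_val_zero,
    cons_val_one, empty_val', cons_val_fin_one] at h01 h10
  exact ⟨mul_left_cancel₀ h2 (by linear_combination -h01),
    mul_left_cancel₀ h2 (by linear_combination -h10)⟩

theorem eq_smul_of_reflection_invariant (h2 : (2 : K) ≠ 0) (hc : c ≠ 0)
    (hR : (!![-1, 2 * c; 0, 1] : Matrix (Fin 2) (Fin 2) K)ᵀ * B * !![-1, 2 * c; 0, 1] = B)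
    (hT : (!![1, 0; 2 * c, -1] : Matrix (Fin 2) (Fin 2) K)ᵀ * B * !![1, 0; 2 * c, -1] = B) :
    B = B 0 0 • !![1, -c; -c, 1] := by
  obtain ⟨hb, hd⟩ := offDiag_eq_of_transpose_mul_mul_upper_reflection h2 hR
  obtain ⟨hb', -⟩ := offDiag_eq_of_transpose_mul_mul_lower_reflection h2 hT
  have hae : B 1 1 = B 0 0 := mul_left_cancel₀ hc (by linear_combination hb' - hb)
  ext i j
  fin_cases i <;> fin_cases j <;> simp [hb, hd, hae, mul_comm]

end Matrix

theorem stmt7_general (m k : ℕ) (hk2 : 2 * k < m)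
    (c : ℂ) (hc : c = (Real.cos ((k : ℝ) * Real.pi / (m : ℝ)) : ℂ))
    (R T : Matrix (Fin 2) (Fin 2) ℂ)
    (hR : R = !![-1, 2 * c; 0, 1])
    (hT : T = !![1, 0; 2 * c, -1])
    (B : Matrix (Fin 2) (Fin 2) ℂ)
    (hBR : R.transpose * B * R = B) (hBT : T.transpose * B * T = B) :
    ∃ z : ℂ, B = z • !![1, -c; -c, 1] := by
  have hc0 : c ≠ 0 := by
    rw [hc]
    exact_mod_cast (Real.cos_nat_mul_pi_div_pos hk2).ne'
  subst hR hT
  exact ⟨B 0 0, eq_smul_of_reflection_invariant two_ne_zero hc0 hBR hBT⟩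

/-- For `1 ≤ k < m/2`, any `D_m`-invariant bilinear form on `ρ_k` is a scalar
multiple of the symmetric form `[[1, -cos(kπ/m)], [-cos(kπ/m), 1]]`. -/
theorem stmt7 (m k : ℕ) (hm : 2 ≤ m) (hk1 : 1 ≤ k) (hk2 : 2 * k < m)
    (c : ℂ) (hc : c = (Real.cos ((k : ℝ) * Real.pi / (m : ℝ)) : ℂ))
    (R T : Matrix (Fin 2) (Fin 2) ℂ)
    (hR : R = !![-1, 2 * c; 0, 1])
    (hT : T = !![1, 0; 2 * c, -1])
    (B : Matrix (Fin 2) (Fin 2) ℂ)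
    (hBR : R.transpose * B * R = B) (hBT : T.transpose * B * T = B) :
    ∃ z : ℂ, B = z • !![1, -c; -c, 1] :=
  stmt7_general m k hk2 c hc R T hR hT B hBR hBT
end

section
/- For x, y ∈ ℂ, let ϱ_{x,y} be the representation of the infinite dihedral group D_∞ = ⟨r, t | r² = t² = e⟩ on ℂβ_r ⊕ ℂβ_t given by r·β_r = −β_r, r·β_t = β_t + xβ_r, t·β_t = −β_t, t·β_r = β_r + yβ_t. Then for x, y, x′, y′ ∈ ℂ^×, the representations ϱ_{x,y} and ϱ_{x′,y′} are isomorphic if and only if xy = x′y′. -/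
/-!
Away from characteristic 2, a matrix intertwining `ϱ_{x,y}` with `ϱ_{x',y'}` must be diagonal,
and `diag(a, d)` intertwines them exactly when `a x = x' d` and `d y = y' a`. For invertible
`diag(a, d)` multiplying these gives `x y = x' y'`; conversely `diag(x', x)` is an isomorphism.
-/

namespace InfiniteDihedral

variable {K : Type*} [Field K]

-- The matrices of `r` and `t` in the basis `(β_r, β_t)`, images of basis vectors as columns.
def rhoR (x : K) : Matrix (Fin 2) (Fin 2) K := !![-1, x; 0, 1]

def rhoT (y : K) : Matrix (Fin 2) (Fin 2) K := !![1, 0; y, -1]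

variable {x y x' y' : K} {P : Matrix (Fin 2) (Fin 2) K}

theorem mul_rhoR_eq_rhoR_mul_iff (hK : ringChar K ≠ 2) :
    P * rhoR x = rhoR x' * P ↔ P 1 0 = 0 ∧ P 0 0 * x + 2 * P 0 1 = x' * P 1 1 := by
  rw [P.eta_fin_two, rhoR, rhoR, Matrix.mul_fin_two, Matrix.mul_fin_two, ← Matrix.ext_iff]
  simp only [Matrix.of_apply, Matrix.cons_val_zero, Matrix.cons_val_one, Fin.forall_fin_two]
  grind [Ring.two_ne_zero hK]

theorem mul_rhoT_eq_rhoT_mul_iff (hK : ringChar K ≠ 2) :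
    P * rhoT y = rhoT y' * P ↔ P 0 1 = 0 ∧ P 1 1 * y + 2 * P 1 0 = y' * P 0 0 := by
  rw [P.eta_fin_two, rhoT, rhoT, Matrix.mul_fin_two, Matrix.mul_fin_two, ← Matrix.ext_iff]
  simp only [Matrix.of_apply, Matrix.cons_val_zero, Matrix.cons_val_one, Fin.forall_fin_two]
  grind [Ring.two_ne_zero hK]

theorem intertwines_iff (hK : ringChar K ≠ 2) :
    (P * rhoR x = rhoR x' * P ∧ P * rhoT y = rhoT y' * P) ↔
      ∃ a d, P = !![a, 0; 0, d] ∧ a * x = x' * d ∧ d * y = y' * a := by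
  rw [mul_rhoR_eq_rhoR_mul_iff hK, mul_rhoT_eq_rhoT_mul_iff hK]
  constructor
  · rintro ⟨⟨hc, hR⟩, hb, hT⟩
    refine ⟨P 0 0, P 1 1, ?_, by simpa [hb] using hR, by simpa [hc] using hT⟩
    rw [P.eta_fin_two, hb, hc]
    simp
  · rintro ⟨a, d, rfl, hR, hT⟩
    simp [hR, hT]

theorem isUnit_diag_iff {a d : K} : IsUnit !![a, 0; 0, d] ↔ a ≠ 0 ∧ d ≠ 0 := by
  simp [Matrix.isUnit_iff_isUnit_det, Matrix.det_fin_two_of]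

end InfiniteDihedral

open InfiniteDihedral in
theorem stmt8_general (x y x' y' : ℂ) (hx : x ≠ 0) (hx' : x' ≠ 0) :
    (∃ P : Matrix (Fin 2) (Fin 2) ℂ, IsUnit P ∧
      P * !![-1, x; 0, 1] = !![-1, x'; 0, 1] * P ∧
      P * !![1, 0; y, -1] = !![1, 0; y', -1] * P) ↔ x * y = x' * y' := by
  change (∃ P, IsUnit P ∧ P * rhoR x = rhoR x' * P ∧ P * rhoT y = rhoT y' * P) ↔ _
  have hℂ : ringChar ℂ ≠ 2 := by simp [ringChar.eq_zero]
  simp only [intertwines_iff hℂ]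
  constructor
  · rintro ⟨_, hP, a, d, rfl, hR, hT⟩
    obtain ⟨ha, hd⟩ := isUnit_diag_iff.mp hP
    apply mul_left_cancel₀ (mul_ne_zero ha hd)
    linear_combination (d * y) * hR + (x' * d) * hT
  · intro h
    exact ⟨_, isUnit_diag_iff.mpr ⟨hx', hx⟩, x', x, rfl, rfl, by linear_combination h⟩

/-- For `x, y, x', y' ∈ ℂ^×`, the `D_∞`-representations `ϱ_{x,y}` and
`ϱ_{x',y'}` (given on generators by the matrices below) are isomorphic
(intertwined by an invertible matrix) if and only if `x y = x' y'`. -/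
theorem stmt8 (x y x' y' : ℂ) (hx : x ≠ 0) (hy : y ≠ 0) (hx' : x' ≠ 0) (hy' : y' ≠ 0) :
    (∃ P : Matrix (Fin 2) (Fin 2) ℂ, IsUnit P ∧
      P * !![-1, x; 0, 1] = !![-1, x'; 0, 1] * P ∧
      P * !![1, 0; y, -1] = !![1, 0; y', -1] * P) ↔ x * y = x' * y' :=
  stmt8_general x y x' y' hx hx'
end

section
/- For x, y ∈ ℂ^×, the representation ϱ_{x,y} of D_∞ on ℂ² (given by r ↦ [[-1,x],[0,1]], t ↦ [[1,0],[y,-1]]) is irreducible if and only if xy ≠ 4. -/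
/-!
A proper nonzero subrepresentation is a line spanned by a common eigenvector of `r` and `t`.
The eigenlines of `r` are `⟨e₀⟩` and `⟨(x, 2)⟩`, those of `t` are `⟨e₁⟩` and `⟨(2, y)⟩`; as
`x, y ≠ 0`, the only possible coincidence is `⟨(x, 2)⟩ = ⟨(2, y)⟩`, which happens exactly when
`x y = 4`. Concretely, from a vector `v` with `v₀ ≠ 0` the maps `t + 1` and then `r - 1`
produce `v₀ (x y - 4) e₀`, other nonzero vectors are multiples of `e₁`, and `t - 1`, `r - 1`
send `e₀` to `y e₁` and `e₁` to `x e₀`.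
-/

open Matrix Module

variable {K : Type*} [Field K]

lemma Submodule.mem_of_mulVec_add_smul_eq {n : Type*} [Fintype n] {M : Matrix n n K}
    {U : Submodule K (n → K)} (hM : ∀ v ∈ U, M *ᵥ v ∈ U) {v w : n → K} (hv : v ∈ U)
    {a c : K} (hc : c ≠ 0) (h : M *ᵥ v + a • v = c • w) : w ∈ U := by
  rw [← U.smul_mem_iff hc, ← h]
  exact U.add_mem (hM v hv) (U.smul_mem a hv)

lemma mulVec_mem_span_singleton_of_mulVec_eq {n : Type*} [Fintype n] {M : Matrix n n K}
    {w : n → K} (hw : M *ᵥ w = w) : ∀ v ∈ K ∙ w, M *ᵥ v ∈ K ∙ w := by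
  rintro v hv
  obtain ⟨c, rfl⟩ := Submodule.mem_span_singleton.1 hv
  rw [mulVec_smul, hw]
  exact hv

lemma span_singleton_ne_top_fin_two {w : Fin 2 → K} (hw : w ≠ 0) : K ∙ w ≠ ⊤ := by
  intro h
  have := finrank_span_singleton (K := K) hw
  rw [h, finrank_top, finrank_fin_fun] at this
  norm_num at this

lemma eq_top_of_mem_of_mem {U : Submodule K (Fin 2 → K)} (h₀ : ![1, 0] ∈ U)
    (h₁ : ![0, 1] ∈ U) : U = ⊤ := by
  refine eq_top_iff.2 fun v _ => ?_
  have hv : v = v 0 • ![1, 0] + v 1 • ![0, 1] := by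
    ext i; fin_cases i <;> simp
  rw [hv]
  exact U.add_mem (U.smul_mem _ h₀) (U.smul_mem _ h₁)

theorem exists_invariant_ne_bot_ne_top {x y : K} (hx : x ≠ 0) (hxy : x * y = 4) :
    ∃ U : Submodule K (Fin 2 → K),
      (∀ v ∈ U, !![-1, x; 0, 1] *ᵥ v ∈ U) ∧ (∀ v ∈ U, !![1, 0; y, -1] *ᵥ v ∈ U) ∧
      U ≠ ⊥ ∧ U ≠ ⊤ := by
  have hw : ![x, 2] ≠ 0 := fun h => hx (congrFun h 0)
  refine ⟨K ∙ ![x, 2], mulVec_mem_span_singleton_of_mulVec_eq ?_,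
    mulVec_mem_span_singleton_of_mulVec_eq ?_, by simpa using hw,
    span_singleton_ne_top_fin_two hw⟩
  · ext i; fin_cases i <;> simp; ring
  · ext i; fin_cases i <;> simp; linear_combination hxy

theorem eq_bot_or_eq_top_of_invariant {x y : K} (hx : x ≠ 0) (hy : y ≠ 0) (hxy : x * y ≠ 4)
    {U : Submodule K (Fin 2 → K)} (hR : ∀ v ∈ U, !![-1, x; 0, 1] *ᵥ v ∈ U)
    (hT : ∀ v ∈ U, !![1, 0; y, -1] *ᵥ v ∈ U) : U = ⊥ ∨ U = ⊤ := by
  refine or_iff_not_imp_left.2 fun hU => ?_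
  obtain ⟨v, hvU, hv⟩ := U.ne_bot_iff.1 hU
  have he₁ : ![0, 1] ∈ U → ![1, 0] ∈ U := fun h =>
    Submodule.mem_of_mulVec_add_smul_eq hR h (a := -1) hx (by ext i; fin_cases i <;> simp)
  have he₀ : ![1, 0] ∈ U := by
    by_cases h0 : v 0 = 0
    · have h1 : v 1 ≠ 0 := fun h1 => hv (by ext i; fin_cases i <;> simp [h0, h1])
      refine he₁ ((U.smul_mem_iff h1).1 ?_)
      convert hvU using 1
      ext i; fin_cases i <;> simp [h0]
    · have h2y : ![2, y] ∈ U := Submodule.mem_of_mulVec_add_smul_eq hT hvU (a := 1) h0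
        (by ext i; fin_cases i <;> simp [vecHead, vecTail] <;> ring)
      exact Submodule.mem_of_mulVec_add_smul_eq hR h2y (a := -1) (sub_ne_zero.2 hxy)
        (by ext i; fin_cases i <;> simp; ring)
  exact eq_top_of_mem_of_mem he₀ <| Submodule.mem_of_mulVec_add_smul_eq hT he₀ (a := -1) hy
    (by ext i; fin_cases i <;> simp)

/-- For `x, y ∈ ℂ^×`, the `D_∞`-representation `ϱ_{x,y}` is irreducible if and
only if `x y ≠ 4`. -/
theorem stmt9 (x y : ℂ) (hx : x ≠ 0) (hy : y ≠ 0) :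
    (∀ U : Submodule ℂ (Fin 2 → ℂ),
      (∀ v ∈ U, (!![-1, x; 0, 1] : Matrix (Fin 2) (Fin 2) ℂ).mulVec v ∈ U) →
      (∀ v ∈ U, (!![1, 0; y, -1] : Matrix (Fin 2) (Fin 2) ℂ).mulVec v ∈ U) →
      U = ⊥ ∨ U = ⊤) ↔ x * y ≠ 4 := by
  refine ⟨fun h hxy => ?_, fun hxy U hR hT => eq_bot_or_eq_top_of_invariant hx hy hxy hR hT⟩
  obtain ⟨U, hR, hT, hbot, htop⟩ := exists_invariant_ne_bot_ne_top hx hxy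
  exact (h U hR hT).elim hbot htop
end

section
/- Every indecomposable 2-dimensional representation ϱ of D_∞ in which ϱ(r) ≠ ±id and ϱ(t) ≠ ±id, and in which the (−1)-eigenvectors of ϱ(r) and ϱ(t) are linearly independent, is isomorphic to ϱ_{x,y} for some x, y ∈ ℂ, where ϱ_{x,y}(r) = [[-1,x],[0,1]] and ϱ_{x,y}(t) = [[1,0],[y,-1]] in the basis of (−1)-eigenvectors. -/
/-!
By Cayley–Hamilton, a `2 × 2` involution other than `±1` has trace `0`. In the basis `(u, v)` of
`(-1)`-eigenvectors, the first column of `A` is `(-1, 0)` and the second column of `B` is `(0, -1)`;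
the vanishing traces then force the remaining diagonal entries to be `1`.
-/

namespace Matrix

variable {K : Type*} [Field K]

theorem trace_eq_zero_of_sq_eq_one {A : Matrix (Fin 2) (Fin 2) K} (hA : A ^ 2 = 1)
    (hA1 : A ≠ 1) (hA1' : A ≠ -1) : A.trace = 0 := by
  by_contra htr
  have hCH : A ^ 2 - A.trace • A + A.det • 1 = 0 := by
    simpa [charpoly_fin_two, Algebra.smul_def, sub_eq_add_neg] using A.aeval_self_charpoly
  set c := A.trace⁻¹ * (1 + A.det)
  have hscalar : A = c • 1 := by
    have hsmul : A.trace • A = (1 + A.det) • 1 := by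
      rw [hA] at hCH
      rw [add_smul, one_smul, ← sub_eq_zero, ← neg_eq_zero, ← hCH]
      abel
    rw [mul_smul, ← hsmul, smul_smul, inv_mul_cancel₀ htr, one_smul]
  have hc : c * c = 1 := by
    have := congrFun (congrFun hA 0) 0
    rw [hscalar, sq, smul_mul_smul_comm] at this
    simpa using this
  rcases mul_self_eq_one_iff.mp hc with hc | hc
  · exact hA1 (by rw [hscalar, hc, one_smul])
  · exact hA1' (by rw [hscalar, hc, neg_one_smul])

theorem conj_mulVec_single_of_mulVec_col {n : Type*} [Fintype n] [DecidableEq n]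
    {A Q : Matrix n n K} (hQ : IsUnit Q) {j : n} {c : K}
    (h : A *ᵥ Q.col j = c • Q.col j) :
    (Q⁻¹ * A * Q) *ᵥ Pi.single j 1 = c • Pi.single j 1 := by
  rw [← mulVec_mulVec, mulVec_single_one, ← mulVec_mulVec, h, mulVec_smul,
    ← mulVec_single_one, mulVec_mulVec, nonsing_inv_mul _ ((isUnit_iff_isUnit_det Q).mp hQ),
    one_mulVec]

theorem eq_of_mulVec_single_zero {M : Matrix (Fin 2) (Fin 2) K}
    (h : M *ᵥ Pi.single 0 1 = -Pi.single 0 1) (ht : M.trace = 0) :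
    M = !![-1, M 0 1; 0, 1] := by
  have h00 : M 0 0 = -1 := by simpa using congrFun h 0
  have h10 : M 1 0 = 0 := by simpa using congrFun h 1
  have h11 : M 1 1 = 1 := by rw [trace_fin_two, h00] at ht; linear_combination ht
  conv_lhs => rw [eta_fin_two M, h00, h10, h11]

theorem eq_of_mulVec_single_one {M : Matrix (Fin 2) (Fin 2) K}
    (h : M *ᵥ Pi.single 1 1 = -Pi.single 1 1) (ht : M.trace = 0) :
    M = !![1, 0; M 1 0, -1] := by
  have h01 : M 0 1 = 0 := by simpa using congrFun h 0
  have h11 : M 1 1 = -1 := by simpa using congrFun h 1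
  have h00 : M 0 0 = 1 := by rw [trace_fin_two, h11] at ht; linear_combination ht
  conv_lhs => rw [eta_fin_two M, h00, h01, h11]

variable {A Q : Matrix (Fin 2) (Fin 2) K}

theorem conj_eq_of_sq_eq_one_of_mulVec_col_zero (hQ : IsUnit Q) (hA : A ^ 2 = 1)
    (hA1 : A ≠ 1) (hA1' : A ≠ -1) (hu : A *ᵥ Q.col 0 = -Q.col 0) :
    Q⁻¹ * A * Q = !![-1, (Q⁻¹ * A * Q) 0 1; 0, 1] := by
  rw [← neg_one_smul K (Q.col 0)] at hu
  refine eq_of_mulVec_single_zero ?_ ?_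
  · rw [conj_mulVec_single_of_mulVec_col hQ hu, neg_one_smul]
  · rw [trace_conj' hQ, trace_eq_zero_of_sq_eq_one hA hA1 hA1']

theorem conj_eq_of_sq_eq_one_of_mulVec_col_one (hQ : IsUnit Q) (hA : A ^ 2 = 1)
    (hA1 : A ≠ 1) (hA1' : A ≠ -1) (hv : A *ᵥ Q.col 1 = -Q.col 1) :
    Q⁻¹ * A * Q = !![1, 0; (Q⁻¹ * A * Q) 1 0, -1] := by
  rw [← neg_one_smul K (Q.col 1)] at hv
  refine eq_of_mulVec_single_one ?_ ?_
  · rw [conj_mulVec_single_of_mulVec_col hQ hv, neg_one_smul]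
  · rw [trace_conj' hQ, trace_eq_zero_of_sq_eq_one hA hA1 hA1']

theorem inv_mul_eq_conj_mul_inv (hQ : IsUnit Q) (A : Matrix (Fin 2) (Fin 2) K) :
    Q⁻¹ * A = Q⁻¹ * A * Q * Q⁻¹ := by
  rw [Matrix.mul_assoc _ Q, mul_nonsing_inv _ ((isUnit_iff_isUnit_det Q).mp hQ), Matrix.mul_one]

end Matrix

theorem stmt10_general (A B : Matrix (Fin 2) (Fin 2) ℂ)
    (hA2 : A ^ 2 = 1) (hB2 : B ^ 2 = 1)
    (hA1 : A ≠ 1) (hA1' : A ≠ -1) (hB1 : B ≠ 1) (hB1' : B ≠ -1)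
    (u v : Fin 2 → ℂ)
    (hu : A.mulVec u = -u) (hv : B.mulVec v = -v)
    (hind : LinearIndependent ℂ ![u, v]) :
    ∃ x y : ℂ, ∃ P : Matrix (Fin 2) (Fin 2) ℂ, IsUnit P ∧
      P * A = !![-1, x; 0, 1] * P ∧ P * B = !![1, 0; y, -1] * P := by
  set Q : Matrix (Fin 2) (Fin 2) ℂ := (Matrix.of ![u, v]).transpose
  have hQ : IsUnit Q := Matrix.linearIndependent_cols_iff_isUnit.mp hind
  have hA := Matrix.conj_eq_of_sq_eq_one_of_mulVec_col_zero hQ hA2 hA1 hA1' hu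
  have hB := Matrix.conj_eq_of_sq_eq_one_of_mulVec_col_one hQ hB2 hB1 hB1' hv
  exact ⟨_, _, Q⁻¹, Matrix.isUnit_nonsing_inv_iff.mpr hQ,
    by rw [Matrix.inv_mul_eq_conj_mul_inv hQ, ← hA],
    by rw [Matrix.inv_mul_eq_conj_mul_inv hQ, ← hB]⟩

/-- Every indecomposable 2-dimensional representation of `D_∞` (given by two
involutions `A`, `B`), with `A ≠ ±1`, `B ≠ ±1`, whose `(-1)`-eigenvectors of
`A` and `B` are linearly independent, is isomorphic to `ϱ_{x,y}` for some
`x, y ∈ ℂ`. -/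
theorem stmt10 (A B : Matrix (Fin 2) (Fin 2) ℂ)
    (hA2 : A ^ 2 = 1) (hB2 : B ^ 2 = 1)
    (hA1 : A ≠ 1) (hA1' : A ≠ -1) (hB1 : B ≠ 1) (hB1' : B ≠ -1)
    (hindec : ¬ ∃ U U' : Submodule ℂ (Fin 2 → ℂ), U ≠ ⊥ ∧ U' ≠ ⊥ ∧ IsCompl U U' ∧
      (∀ v ∈ U, A.mulVec v ∈ U) ∧ (∀ v ∈ U, B.mulVec v ∈ U) ∧
      (∀ v ∈ U', A.mulVec v ∈ U') ∧ (∀ v ∈ U', B.mulVec v ∈ U'))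
    (u v : Fin 2 → ℂ) (hu0 : u ≠ 0) (hv0 : v ≠ 0)
    (hu : A.mulVec u = -u) (hv : B.mulVec v = -v)
    (hind : LinearIndependent ℂ ![u, v]) :
    ∃ x y : ℂ, ∃ P : Matrix (Fin 2) (Fin 2) ℂ, IsUnit P ∧
      P * A = !![-1, x; 0, 1] * P ∧ P * B = !![1, 0; y, -1] * P :=
  stmt10_general A B hA2 hB2 hA1 hA1' hB1 hB1' u v hu hv hind
end

section
/- Let W be the Coxeter group of type Ã_n (affine symmetric group) with generators s₀,…,s_n, and for x ∈ ℂ^× let V_x be the representation on ℂ^{n+1} with basis α₀,…,α_n where s_i·α_i = −α_i, s_i·α_{i±1} = α_{i±1} + α_i (indices mod n+1), except s₀·α_n = α_n + x α₀ and s_n·α₀ = α₀ + x^{−1} α_n, and s_i·α_j = α_j when |i−j| mod (n+1) ≥ 2. Then the (n+1)×(n+1) matrix A with diagonal entries 1, entries −1/2 at positions (i, i±1 mod n+1) except A₀ₙ = −x/2 and Aₙ₀ = −1/(2x), and 0 elsewhere, has determinant (2 − x − x^{−1})/2^{n+1}. -/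
/-!
Twice the matrix is `2 - P - P⁻¹`, where `P` is the cyclic shift matrix whose entry in the last
row is `x⁻¹` instead of `1`; hence `P (2A) = -(1 - P)²`. Here `det P = (-1)ⁿ x⁻¹` and, by a Laplace
expansion along the first column (both minors are triangular), `det (1 - P) = 1 - x⁻¹`, so
`2ⁿ⁺¹ det A = -x (1 - x⁻¹)² = 2 - x - x⁻¹`.
-/

namespace Matrix

variable {R : Type*} [CommRing R]

theorem det_mul_det_two_sub_sub_of_mul_eq_one {N : Type*} [Fintype N] [DecidableEq N]
    {P Q : Matrix N N R} (hPQ : P * Q = 1) :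
    P.det * (2 - P - Q).det = (-1) ^ Fintype.card N * (1 - P).det ^ 2 := by
  have hfactor : P * (2 - P - Q) = -((1 - P) * (1 - P)) := by
    rw [mul_sub, mul_sub, hPQ]
    noncomm_ring
  rw [← det_mul, hfactor, det_neg, det_mul, sq]

variable {n : ℕ}

noncomputable def twistedShift (w : Fin (n + 1) → R) : Matrix (Fin (n + 1)) (Fin (n + 1)) R :=
  diagonal w * (finRotate (n + 1)).permMatrix R

theorem twistedShift_apply (w : Fin (n + 1) → R) (i j : Fin (n + 1)) :
    twistedShift w i j = if j = i + 1 then w i else 0 := by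
  simp [twistedShift, diagonal_mul, PEquiv.toMatrix_apply, eq_comm]

theorem twistedShift_mul_transpose (w v : Fin (n + 1) → R) :
    twistedShift w * (twistedShift v)ᵀ = diagonal (w * v) := by
  simp [twistedShift, transpose_mul, Matrix.mul_assoc,
    ← Matrix.mul_assoc (Equiv.Perm.permMatrix R _), ← permMatrix_mul]

theorem det_twistedShift (w : Fin (n + 1) → R) :
    (twistedShift w).det = (-1) ^ n * ∏ i, w i := by
  simp [twistedShift, sign_finRotate, mul_comm]

theorem det_one_sub_twistedShift (w : Fin (n + 1) → R) :
    (1 - twistedShift w).det = 1 - ∏ i, w i := by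
  cases n with
  | zero => simp [twistedShift_apply]
  | succ m =>
    set M := 1 - twistedShift w
    have hM : ∀ i j, M i j = (if i = j then 1 else 0) - if j = i + 1 then w i else 0 :=
      fun i j => by simp [M, twistedShift_apply, one_apply]
    have hupper : (M.submatrix Fin.succ Fin.succ).det = 1 := by
      rw [det_of_isUpperTriangular]
      · exact Finset.prod_eq_one fun i _ => by simp [hM]
      · intro i j hji
        rw [id, id, Fin.lt_def] at hji
        simp only [submatrix_apply, hM, Fin.ext_iff, Fin.val_add_one, Fin.val_succ, Fin.val_last]
        split_ifs <;> first | omega | simp_all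
    have hlower : (M.submatrix Fin.castSucc Fin.succ).det =
        (-1) ^ (m + 1) * ∏ i : Fin (m + 1), w i.castSucc := by
      rw [det_of_isLowerTriangular]
      · simp [hM, Fin.ext_iff, Finset.prod_neg]
      · intro i j hij
        rw [OrderDual.toDual_lt_toDual, Fin.lt_def] at hij
        simp only [submatrix_apply, hM, Fin.ext_iff, Fin.val_add_one, Fin.val_succ, Fin.val_last,
          Fin.val_castSucc]
        split_ifs <;> first | omega | simp_all
    have hcol : ∀ i : Fin m, M i.castSucc.succ 0 = 0 := by
      intro i
      simp only [hM, Fin.ext_iff, Fin.val_add_one, Fin.val_succ, Fin.val_last, Fin.val_castSucc]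
      split_ifs <;> first | omega | simp_all
    have hM00 : M 0 0 = 1 := by simp [hM]
    have hMlast : M (Fin.last (m + 1)) 0 = -w (Fin.last (m + 1)) := by simp [hM]
    have hsign : (-1 : R) ^ (m + 1) * (-1) ^ (m + 1) = 1 := by rw [← mul_pow]; norm_num
    rw [det_succ_column_zero, Fin.sum_univ_succ, Fin.sum_univ_castSucc,
      Finset.sum_eq_zero fun i _ => by rw [hcol, mul_zero, zero_mul], zero_add, Fin.succ_last,
      Fin.succAbove_zero, Fin.succAbove_last, hM00, hMlast, hupper, hlower, Fin.val_zero,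
      Fin.val_last, Fin.prod_univ_castSucc w, Nat.succ_eq_add_one]
    linear_combination (-(∏ i : Fin (m + 1), w i.castSucc) * w (Fin.last (m + 1))) * hsign

end Matrix

open Matrix

/-- The determinant of the `(n+1) × (n+1)` matrix `A` controlling the
reducibility of the generalized geometric representation of affine type `Ã_n`
with parameter `x` equals `(2 - x - x⁻¹)/2^(n+1)`. -/
theorem stmt12 (n : ℕ) (hn : 2 ≤ n) (x : ℂ) (hx : x ≠ 0)
    (A : Matrix (Fin (n + 1)) (Fin (n + 1)) ℂ)
    (hA : ∀ i j : Fin (n + 1), A i j =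
      if i = j then 1
      else if i = 0 ∧ j = Fin.last n then -x / 2
      else if i = Fin.last n ∧ j = 0 then -1 / (2 * x)
      else if (j : ℕ) = (i : ℕ) + 1 ∨ (i : ℕ) = (j : ℕ) + 1 then -1 / 2
      else 0) :
    A.det = (2 - x - x⁻¹) / 2 ^ (n + 1) := by
  set w : Fin (n + 1) → ℂ := fun i => if i = Fin.last n then x⁻¹ else 1
  have htwoA : (2 : ℂ) • A = 2 - twistedShift w - (twistedShift w⁻¹)ᵀ := by
    ext i j
    simp only [Matrix.smul_apply, Matrix.sub_apply, transpose_apply, twistedShift_apply, hA,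
      Pi.inv_apply, w, ofNat_apply, smul_eq_mul, Fin.ext_iff, Fin.val_add_one, Fin.val_last,
      Fin.val_zero]
    split_ifs <;> first | omega | (field_simp; ring)
  have hPQ : twistedShift w * (twistedShift w⁻¹)ᵀ = 1 := by
    rw [twistedShift_mul_transpose, ← diagonal_one]
    congr 1
    ext i
    simp only [w, Pi.mul_apply, Pi.inv_apply]
    split_ifs <;> simp [hx]
  have hprod : ∏ i, w i = x⁻¹ := by simp [w]
  have hdets := det_mul_det_two_sub_sub_of_mul_eq_one hPQ
  rw [← htwoA, det_smul, det_twistedShift, det_one_sub_twistedShift, hprod,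
    Fintype.card_fin] at hdets
  have hdet : x⁻¹ * (2 ^ (n + 1) * A.det) = -(1 - x⁻¹) ^ 2 :=
    mul_left_cancel₀ (pow_ne_zero n (neg_ne_zero.mpr one_ne_zero))
      (by rw [← mul_assoc, hdets]; ring)
  field_simp at hdet ⊢
  linear_combination hdet
end

section
/- The generalized geometric representation of the Coxeter group W of type Ã_n associated with parameter x ∈ ℂ^× (as in the previous context) is irreducible if and only if x ≠ 1. Equivalently: a nonzero vector v = Σ x_j α_j fixed by all generators s₀,…,s_n exists if and only if x = 1. -/
/-!
At an interior node the fixed-point equation of `s_i` reads `2 v_i = v_{i-1} + v_{i+1}`, so a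
fixed vector is an arithmetic progression `v_k = v_0 + k d`. The two boundary equations carry
`x` and `x⁻¹`; together they give `(x - 1) d = 0`, so for `x ≠ 1` the progression is constant
and the first boundary equation becomes `(x - 1) v_0 = 0`: the vector vanishes. For `x = 1` the
constant vector is fixed.
-/

open Finset

theorem eq_add_mul_of_add_eq_two_mul {R : Type*} [CommRing R] {f : ℕ → R} {n : ℕ}
    (h : ∀ k, k + 2 ≤ n → f k + f (k + 2) = 2 * f (k + 1)) :
    ∀ k ≤ n, f k = f 0 + k * (f 1 - f 0)
  | 0, _ => by simp
  | 1, _ => by simp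
  | k + 2, hk => by
    have hk2 := h k hk
    rw [eq_add_mul_of_add_eq_two_mul h k (by omega),
      eq_add_mul_of_add_eq_two_mul h (k + 1) (by omega)] at hk2
    push_cast at hk2 ⊢
    linear_combination hk2

namespace AffineTypeA

section Reflection

variable {ι R : Type*} [Fintype ι] [DecidableEq ι] [CommRing R]

def reflection (κ : ι → ι → R) (i : ι) (v : ι → R) : ι → R :=
  fun l => if l = i then -v i + ∑ j ∈ univ \ {i}, κ i j * v j else v l

theorem reflection_eq_self_iff (κ : ι → ι → R) (i : ι) (v : ι → R) :
    reflection κ i v = v ↔ ∑ j ∈ univ \ {i}, κ i j * v j = 2 * v i := by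
  refine ⟨fun h => ?_, fun h => funext fun l => ?_⟩
  · have hi := congrFun h i
    rw [reflection, if_pos rfl] at hi
    linear_combination hi
  · rw [reflection]
    split_ifs with hl
    · subst hl
      linear_combination h
    · rfl

end Reflection

variable {K : Type*} [Field K] {n : ℕ}

/-- `s_i α_j = α_j + coeff x i j • α_i` for `j ≠ i`. -/
def coeff (x : K) (i j : Fin (n + 1)) : K :=
  if i = 0 ∧ j = Fin.last n then x
  else if i = Fin.last n ∧ j = 0 then x⁻¹
  else if (j : ℕ) = (i : ℕ) + 1 ∨ (i : ℕ) = (j : ℕ) + 1 then 1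
  else 0

/-- `i ± 1`, computed in `Fin (n + 1)`, are the neighbours of `i` in the cyclic Dynkin diagram
of `Ã_n`. -/
theorem coeff_eq (hn : 2 ≤ n) (x : K) (i j : Fin (n + 1)) :
    coeff x i j = (if j = i + 1 then (if i = Fin.last n then x⁻¹ else 1) else 0)
      + (if j = i - 1 then (if i = 0 then x else 1) else 0) := by
  have hi := i.isLt
  have hj := j.isLt
  simp only [coeff, Fin.ext_iff, Fin.val_add_one, Fin.coe_sub_one, Fin.val_last, Fin.val_zero]
  split_ifs <;> first | ring1 | (exfalso; omega)

/-- `v` is harmonic on the cycle `Fin (n + 1)`, except that the edge between `Fin.last n` and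
`0` is twisted by `x`. -/
def IsTwistedHarmonic (x : K) (v : Fin (n + 1) → K) : Prop :=
  ∀ i, (if i = Fin.last n then x⁻¹ else 1) * v (i + 1)
    + (if i = 0 then x else 1) * v (i - 1) = 2 * v i

theorem forall_reflection_coeff_eq_self_iff (hn : 2 ≤ n) (x : K) (v : Fin (n + 1) → K) :
    (∀ i, reflection (coeff x) i v = v) ↔ IsTwistedHarmonic x v := by
  refine forall_congr' fun i => ?_
  have hne : i + 1 ≠ i ∧ i - 1 ≠ i := by
    simp only [ne_eq, Fin.ext_iff, Fin.val_add_one, Fin.coe_sub_one, Fin.val_last, Fin.val_zero]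
    constructor <;> split_ifs <;> omega
  simp only [reflection_eq_self_iff, coeff_eq hn, add_mul, ite_mul, zero_mul, sum_add_distrib,
    sum_ite_eq', mem_sdiff, mem_univ, mem_singleton, true_and, if_pos hne.1, if_pos hne.2]

theorem isTwistedHarmonic_one : IsTwistedHarmonic (1 : K) (1 : Fin (n + 1) → K) :=
  fun _ => by norm_num

namespace IsTwistedHarmonic

variable {x : K} {v : Fin (n + 1) → K}

open Fin.NatCast in
theorem natCast_add_eq_two_mul (h : IsTwistedHarmonic x v) {k : ℕ} (hk : k + 2 ≤ n) :
    v k + v (k + 2 : ℕ) = 2 * v (k + 1 : ℕ) := by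
  have hk1 := h (k + 1 : ℕ)
  have hval : ((k + 1 : ℕ) : Fin (n + 1)).val = k + 1 := Fin.val_cast_of_lt (by omega)
  have hlast : ((k + 1 : ℕ) : Fin (n + 1)) ≠ Fin.last n := by
    rw [Ne, Fin.ext_iff, hval, Fin.val_last]; omega
  have hzero : ((k + 1 : ℕ) : Fin (n + 1)) ≠ 0 := by
    rw [Ne, Fin.ext_iff, hval, Fin.val_zero]; omega
  have hsucc : ((k + 1 : ℕ) : Fin (n + 1)) + 1 = (k + 2 : ℕ) := (Nat.cast_succ _).symm
  have hpred : ((k + 1 : ℕ) : Fin (n + 1)) - 1 = k := by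
    rw [Nat.cast_succ, add_sub_cancel_right]
  rw [if_neg hlast, if_neg hzero, hsucc, hpred] at hk1
  linear_combination hk1

theorem eq_at_zero (h : IsTwistedHarmonic x v) (hn : n ≠ 0) :
    v 1 + x * v (Fin.last n) = 2 * v 0 := by
  have h0 := h 0
  have hne : (0 : Fin (n + 1)) ≠ Fin.last n := by
    rw [Ne, Fin.ext_iff, Fin.val_zero, Fin.val_last]; exact hn.symm
  have hpred : (0 : Fin (n + 1)) - 1 = Fin.last n :=
    Fin.ext (by rw [Fin.coe_sub_one, if_pos rfl, Fin.val_last])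
  rw [if_neg hne, if_pos rfl, zero_add, hpred] at h0
  linear_combination h0

theorem eq_at_last (h : IsTwistedHarmonic x v) (hn : n ≠ 0) :
    x⁻¹ * v 0 + v (Fin.last n - 1) = 2 * v (Fin.last n) := by
  have hl := h (Fin.last n)
  have hne : Fin.last n ≠ 0 := by
    rw [Ne, Fin.ext_iff, Fin.val_zero, Fin.val_last]; exact hn
  rw [if_pos rfl, if_neg hne, Fin.last_add_one] at hl
  linear_combination hl

open Fin.NatCast in
theorem eq_one (hn : 2 ≤ n) (hx : x ≠ 0) (hv : v ≠ 0) (h : IsTwistedHarmonic x v) : x = 1 := by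
  obtain ⟨m, rfl⟩ : ∃ m, n = m + 2 := ⟨n - 2, by omega⟩
  obtain ⟨f, hf⟩ : ∃ f : ℕ → K, ∀ k, f k = v k := ⟨_, fun _ => rfl⟩
  have hlin : ∀ k ≤ m + 2, f k = f 0 + k * (f 1 - f 0) :=
    eq_add_mul_of_add_eq_two_mul fun k hk => by
      simpa only [hf] using h.natCast_add_eq_two_mul hk
  have hfirst : f 1 + x * f (m + 2) = 2 * f 0 := by
    simpa only [hf, Nat.cast_one, Nat.cast_zero, Fin.natCast_eq_last]
      using h.eq_at_zero (by omega)
  have hlast : x⁻¹ * f 0 + f (m + 1) = 2 * f (m + 2) := by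
    have hpred : Fin.last (m + 2) - 1 = (m + 1 : ℕ) := by
      rw [← Fin.natCast_eq_last, Nat.cast_succ (m + 1), add_sub_cancel_right]
    simpa only [hf, Nat.cast_zero, Fin.natCast_eq_last, hpred] using h.eq_at_last (by omega)
  rw [hlin (m + 2) le_rfl] at hfirst hlast
  rw [hlin (m + 1) (by omega)] at hlast
  push_cast at hfirst hlast
  have hd : (x - 1) * (f 1 - f 0) = 0 := by
    linear_combination (-1) * hfirst - x * hlast + f 0 * mul_inv_cancel₀ hx
  rw [← sub_eq_zero]
  by_contra hx1
  replace hd : f 1 - f 0 = 0 := (mul_eq_zero.mp hd).resolve_left hx1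
  have h0 : f 0 = 0 := by
    refine (mul_eq_zero.mp ?_).resolve_left hx1
    linear_combination hfirst - (1 + x * (m + 2)) * hd
  refine hv (funext fun i => ?_)
  rw [Pi.zero_apply, ← Fin.cast_val_eq_self i, ← hf, hlin i i.is_le, hd, h0]
  ring

end IsTwistedHarmonic

end AffineTypeA

/-- In the generalized geometric representation `V_x` of the affine symmetric
group of type `Ã_n`, a nonzero vector fixed by all the generators `s_0, …, s_n`
exists if and only if `x = 1`.  (Equivalently, `V_x` is irreducible iff `x ≠ 1`.) -/
theorem stmt13 (n : ℕ) (hn : 2 ≤ n) (x : ℂ) (hx : x ≠ 0)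
    (κ : Fin (n + 1) → Fin (n + 1) → ℂ)
    (hκ : ∀ i j : Fin (n + 1), κ i j =
      if i = 0 ∧ j = Fin.last n then x
      else if i = Fin.last n ∧ j = 0 then x⁻¹
      else if (j : ℕ) = (i : ℕ) + 1 ∨ (i : ℕ) = (j : ℕ) + 1 then 1
      else 0)
    (act : Fin (n + 1) → (Fin (n + 1) → ℂ) → (Fin (n + 1) → ℂ))
    (hact : ∀ i v, act i v = fun l =>
      if l = i then -v i + ∑ j ∈ Finset.univ \ {i}, κ i j * v j else v l) :
    (∃ v : Fin (n + 1) → ℂ, v ≠ 0 ∧ ∀ i, act i v = v) ↔ x = 1 := by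
  obtain rfl : κ = AffineTypeA.coeff x := funext₂ hκ
  obtain rfl : act = AffineTypeA.reflection (AffineTypeA.coeff x) := funext₂ hact
  simp only [AffineTypeA.forall_reflection_coeff_eq_self_iff hn]
  constructor
  · rintro ⟨v, hv, hharm⟩
    exact hharm.eq_one hn hx hv
  · rintro rfl
    exact ⟨1, one_ne_zero, AffineTypeA.isTwistedHarmonic_one⟩
end

section
/- Let W be a Coxeter group with finite generating set S and all m_{rt} < ∞, and let V = ⊕_{s∈S} ℂα_s be a generalized geometric representation (each s ∈ S acts by a reflection with reflection vector α_s, and the α_s form a basis). Then for any distinct r, t ∈ S, the 2-dimensional subspace ℂα_r ⊕ ℂα_t is invariant under the dihedral subgroup ⟨r, t⟩. -/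
/-!
Each simple reflection `s` moves every vector by a multiple of its reflection vector `α_s`, so it
maps any subspace containing `α_s` into itself. Hence `r` and `t` (which are their own inverses)
preserve `span {α_r, α_t}`, and therefore so does every element of the subgroup they generate.
-/

namespace Module.End

variable {R V : Type*} [CommRing R] [AddCommGroup V] [Module R V]

def IsReflection (f : Module.End R V) (α : V) : Prop :=
  f α = -α ∧ ∃ H : Submodule R V, IsCompl H (R ∙ α) ∧ ∀ v ∈ H, f v = v

namespace IsReflection

variable {f : Module.End R V} {α : V}

theorem apply_sub_self_mem (hf : IsReflection f α) (v : V) : f v - v ∈ R ∙ α := by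
  obtain ⟨hα, H, hH, hfix⟩ := hf
  have hle : H ⊔ (R ∙ α) ≤ (R ∙ α).comap (f - 1) := by
    refine sup_le (fun v hv => by simp [hfix v hv]) ?_
    rw [Submodule.span_singleton_le_iff_mem, Submodule.mem_comap, LinearMap.sub_apply, hα]
    have hα_mem := Submodule.mem_span_singleton_self (R := R) α
    exact sub_mem (neg_mem hα_mem) hα_mem
  exact hle (hH.sup_eq_top ▸ Submodule.mem_top)

theorem apply_mem {P : Submodule R V} (hf : IsReflection f α) (hαP : α ∈ P) {v : V}
    (hv : v ∈ P) : f v ∈ P := by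
  have hspan : R ∙ α ≤ P := (Submodule.span_singleton_le_iff_mem α P).mpr hαP
  simpa using P.add_mem (hspan (hf.apply_sub_self_mem v)) hv

end IsReflection

end Module.End

theorem Representation.apply_mem_of_mem_closure {k G V : Type*} [CommSemiring k] [Group G]
    [AddCommMonoid V] [Module k V] (ρ : Representation k G V) {P : Submodule k V} {X : Set G}
    (hX : ∀ x ∈ X, ∀ v ∈ P, ρ x v ∈ P) (hXinv : ∀ x ∈ X, ∀ v ∈ P, ρ x⁻¹ v ∈ P)
    {w : G} (hw : w ∈ Subgroup.closure X) : ∀ v ∈ P, ρ w v ∈ P := by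
  induction hw using Subgroup.closure_induction'' with
  | mem x hx => exact hX x hx
  | inv_mem x hx => exact hXinv x hx
  | one => simp
  | mul x y _ _ hx hy => exact fun v hv => by simpa using hx _ (hy v hv)

theorem stmt14_general {S : Type*} {W : Type*} [Group W]
    (M : CoxeterMatrix S) (cs : CoxeterSystem M W)
    {V : Type*} [AddCommGroup V] [Module ℂ V]
    (ρ : Representation ℂ W V) (b : Module.Basis S ℂ V)
    (hrefl : ∀ s : S, ∃ H : Submodule ℂ V,
      IsCompl H (Submodule.span ℂ {b s}) ∧ ∀ v ∈ H, ρ (cs.simple s) v = v)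
    (hneg : ∀ s : S, ρ (cs.simple s) (b s) = -(b s))
    (r t : S) :
    ∀ w ∈ Subgroup.closure ({cs.simple r, cs.simple t} : Set W),
      ∀ v ∈ Submodule.span ℂ ({b r, b t} : Set V),
        ρ w v ∈ Submodule.span ℂ ({b r, b t} : Set V) := by
  set P := Submodule.span ℂ ({b r, b t} : Set V)
  have hsimple (s : S) (hs : b s ∈ P) : ∀ v ∈ P, ρ (cs.simple s) v ∈ P := fun _ hv =>
    Module.End.IsReflection.apply_mem ⟨hneg s, hrefl s⟩ hs hv
  have hgen : ∀ x ∈ ({cs.simple r, cs.simple t} : Set W), ∀ v ∈ P, ρ x v ∈ P := by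
    rintro x (rfl | rfl) <;> exact hsimple _ (Submodule.subset_span (by simp))
  intro w hw
  refine ρ.apply_mem_of_mem_closure hgen (fun x hx => ?_) hw
  rcases hx with rfl | rfl <;> rw [cs.inv_simple] <;> exact hgen _ (by simp)

/-- In a generalized geometric representation of a Coxeter group `W` (each
simple generator acts as a reflection whose reflection vectors form a basis,
and all `m_{rt} < ∞`), the span of `α_r, α_t` is invariant under the dihedral
subgroup `⟨r, t⟩` for any distinct `r, t ∈ S`. -/
theorem stmt14 {S : Type*} [Fintype S] [DecidableEq S] {W : Type*} [Group W]
    (M : CoxeterMatrix S) (cs : CoxeterSystem M W)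
    (hfin : ∀ r t : S, M r t ≠ 0)
    {V : Type*} [AddCommGroup V] [Module ℂ V]
    (ρ : Representation ℂ W V) (b : Module.Basis S ℂ V)
    (hrefl : ∀ s : S, ∃ H : Submodule ℂ V,
      IsCompl H (Submodule.span ℂ {b s}) ∧ ∀ v ∈ H, ρ (cs.simple s) v = v)
    (hneg : ∀ s : S, ρ (cs.simple s) (b s) = -(b s))
    (r t : S) (hrt : r ≠ t) :
    ∀ w ∈ Subgroup.closure ({cs.simple r, cs.simple t} : Set W),
      ∀ v ∈ Submodule.span ℂ ({b r, b t} : Set V),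
        ρ w v ∈ Submodule.span ℂ ({b r, b t} : Set V) :=
  stmt14_general M cs ρ b hrefl hneg r t
end

section
/- Let W be a Coxeter group with generating set S, all m_{rt} < ∞, and let V = ⊕_{s∈S} ℂα_s be a generalized geometric representation whose associated graph G̃ is connected (i.e., for all adjacent r,t in G̃ the span ℂ⟨α_r, α_t⟩ is an irreducible ⟨r,t⟩-representation, and G̃ connects all of S via such edges). Then every proper subrepresentation U ⊊ V carries the trivial W-action. -/
/-!
Each `s ∈ S` acts as a reflection with root `α_s = b s`, so `s • v - v ∈ ℂ α_s`; hence a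
subrepresentation `U` containing a vector moved by `s` contains `α_s`. Irreducibility of
`ℂ⟨α_r, α_t⟩` along an edge `{r, t}` carries `α_r ∈ U` over to `α_t ∈ U`, and connectedness of
the graph then forces every root into `U`, i.e. `U = V`. So a proper `U` is fixed pointwise by
every simple reflection, hence by `W`.
-/

theorem SimpleGraph.Reachable.of_forall_adj_imp {S : Type*} {G : SimpleGraph S} {p : S → Prop}
    (hp : ∀ u v, G.Adj u v → p u → p v) {u v : S} (h : G.Reachable u v) (hu : p u) : p v := by
  obtain ⟨w⟩ := h
  induction w with
  | nil => exact hu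
  | cons hadj _ ih => exact ih (hp _ _ hadj hu)

section Reflection

variable {K V : Type*} [AddCommGroup V]

theorem LinearMap.sub_self_mem_span_singleton_of_isCompl [Ring K] [Module K V]
    {f : V →ₗ[K] V} {x : V} (hx : f x = -x) {H : Submodule K V} (hH : IsCompl H (K ∙ x))
    (hfix : ∀ v ∈ H, f v = v) (v : V) : f v - v ∈ K ∙ x := by
  obtain ⟨h, hh, p, hp, rfl⟩ := Submodule.mem_sup.mp (hH.sup_eq_top ▸ Submodule.mem_top (x := v))
  obtain ⟨c, rfl⟩ := Submodule.mem_span_singleton.mp hp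
  have hfp : f (c • x) = -(c • x) := by rw [map_smul, hx, smul_neg]
  rw [map_add, hfix h hh, hfp, show h + -(c • x) - (h + c • x) = -(c • x) - c • x by abel]
  exact Submodule.sub_mem _ (Submodule.neg_mem _ hp) hp

theorem apply_mem_of_sub_self_mem [Ring K] [Module K V] {f : V →ₗ[K] V} {x : V}
    (hf : ∀ v, f v - v ∈ K ∙ x) {P : Submodule K V} (hx : x ∈ P) {v : V} (hv : v ∈ P) :
    f v ∈ P := by
  simpa using P.add_mem ((Submodule.span_singleton_le_iff_mem x P).mpr hx (hf v)) hv

variable [DivisionRing K] [Module K V]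

theorem mem_of_apply_ne_self {f : V →ₗ[K] V} {x : V} (hf : ∀ v, f v - v ∈ K ∙ x)
    {U : Submodule K V} (hU : ∀ v ∈ U, f v ∈ U) {v : V} (hv : v ∈ U) (hne : f v ≠ v) : x ∈ U := by
  obtain ⟨c, hc⟩ := Submodule.mem_span_singleton.mp (hf v)
  have hc0 : c ≠ 0 := by
    rintro rfl
    exact hne (sub_eq_zero.mp (by rw [← hc, zero_smul]))
  have hcx : c • x ∈ U := hc ▸ U.sub_mem (hU v hv) hv
  simpa [hc0] using U.smul_mem c⁻¹ hcx

theorem mem_of_irreducible_span_pair {f g : V →ₗ[K] V} {x y : V} (hx0 : x ≠ 0)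
    (hf : ∀ v, f v - v ∈ K ∙ x) (hg : ∀ v, g v - v ∈ K ∙ y)
    (hirr : ∀ U : Submodule K V, U ≤ Submodule.span K {x, y} →
      (∀ v ∈ U, f v ∈ U) → (∀ v ∈ U, g v ∈ U) → U = ⊥ ∨ U = Submodule.span K {x, y})
    {U : Submodule K V} (hUf : ∀ v ∈ U, f v ∈ U) (hUg : ∀ v ∈ U, g v ∈ U) (hxU : x ∈ U) :
    y ∈ U := by
  have hx : x ∈ U ⊓ Submodule.span K {x, y} := ⟨hxU, Submodule.subset_span (by simp)⟩
  have hy : y ∈ Submodule.span K {x, y} := Submodule.subset_span (by simp)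
  rcases hirr (U ⊓ Submodule.span K {x, y}) inf_le_right
      (fun v hv ↦ ⟨hUf v hv.1, apply_mem_of_sub_self_mem hf hx.2 hv.2⟩)
      (fun v hv ↦ ⟨hUg v hv.1, apply_mem_of_sub_self_mem hg hy hv.2⟩) with h | h
  · exact absurd ((Submodule.mem_bot K).mp (h ▸ hx)) hx0
  · exact (h.symm ▸ hy : y ∈ U ⊓ _).1

end Reflection

theorem stmt15_general {S W V : Type*} [Group W]
    [AddCommGroup V] [Module ℂ V]
    (M : CoxeterMatrix S) (cs : CoxeterSystem M W)
    (ρ : Representation ℂ W V) (b : Module.Basis S ℂ V)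
    (hneg : ∀ s : S, ρ (cs.simple s) (b s) = -(b s))
    (hrefl : ∀ s : S, ∃ H : Submodule ℂ V,
      IsCompl H (Submodule.span ℂ {b s}) ∧ ∀ v ∈ H, ρ (cs.simple s) v = v)
    (Gt : SimpleGraph S) (hconn : Gt.Connected)
    (hirr : ∀ r t : S, Gt.Adj r t → ∀ U : Submodule ℂ V,
      U ≤ Submodule.span ℂ ({b r, b t} : Set V) →
      (∀ v ∈ U, ρ (cs.simple r) v ∈ U) → (∀ v ∈ U, ρ (cs.simple t) v ∈ U) →
      U = ⊥ ∨ U = Submodule.span ℂ ({b r, b t} : Set V)) :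
    ∀ U : Submodule ℂ V, (∀ s : S, ∀ v ∈ U, ρ (cs.simple s) v ∈ U) → U ≠ ⊤ →
      ∀ w : W, ∀ v ∈ U, ρ w v = v := by
  intro U hU hUtop w v hv
  have hsub (s : S) (v : V) : ρ (cs.simple s) v - v ∈ ℂ ∙ b s := by
    obtain ⟨H, hH, hfix⟩ := hrefl s
    exact LinearMap.sub_self_mem_span_singleton_of_isCompl (hneg s) hH hfix v
  have hroot_not_mem (s : S) : b s ∉ U := fun hs ↦ hUtop <| by
    have hall (t : S) : b t ∈ U :=
      (hconn.preconnected s t).of_forall_adj_imp (fun r t hrt ↦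
        mem_of_irreducible_span_pair (b.ne_zero r) (hsub r) (hsub t) (hirr r t hrt) (hU r) (hU t)) hs
    rw [eq_top_iff, ← b.span_eq, Submodule.span_le]
    rintro _ ⟨t, rfl⟩
    exact hall t
  have hsimple (s : S) (u : V) (hu : u ∈ U) : ρ (cs.simple s) u = u := by
    by_contra hne
    exact hroot_not_mem s (mem_of_apply_ne_self (hsub s) (hU s) hu hne)
  induction w using cs.simple_induction_left with
  | one => simp
  | mul_simple_left w s ih => rw [map_mul, Module.End.mul_apply, ih, hsimple s v hv]

/-- Let `V` be a generalized geometric representation of a Coxeter group `W`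
(all `m_{rt} < ∞`) whose associated graph `G̃` is connected: for every edge
`{r,t}` of `G̃`, the span of `α_r, α_t` is an irreducible `⟨r,t⟩`-module.
Then every proper subrepresentation `U ⊊ V` carries the trivial `W`-action. -/
theorem stmt15 {S W V : Type*} [Fintype S] [DecidableEq S] [Group W]
    [AddCommGroup V] [Module ℂ V]
    (M : CoxeterMatrix S) (cs : CoxeterSystem M W) (hfin : ∀ r t : S, M r t ≠ 0)
    (ρ : Representation ℂ W V) (b : Module.Basis S ℂ V)
    (hneg : ∀ s : S, ρ (cs.simple s) (b s) = -(b s))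
    (hrefl : ∀ s : S, ∃ H : Submodule ℂ V,
      IsCompl H (Submodule.span ℂ {b s}) ∧ ∀ v ∈ H, ρ (cs.simple s) v = v)
    (Gt : SimpleGraph S) (hconn : Gt.Connected)
    (hirr : ∀ r t : S, Gt.Adj r t → ∀ U : Submodule ℂ V,
      U ≤ Submodule.span ℂ ({b r, b t} : Set V) →
      (∀ v ∈ U, ρ (cs.simple r) v ∈ U) → (∀ v ∈ U, ρ (cs.simple t) v ∈ U) →
      U = ⊥ ∨ U = Submodule.span ℂ ({b r, b t} : Set V)) :
    ∀ U : Submodule ℂ V, (∀ s : S, ∀ v ∈ U, ρ (cs.simple s) v ∈ U) → U ≠ ⊤ →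
      ∀ w : W, ∀ v ∈ U, ρ w v = v :=
  stmt15_general M cs ρ b hneg hrefl Gt hconn hirr
end

section
/- Let W = 𝔖_{n+1} (n ≥ 4) be the symmetric group with its standard Coxeter generating set S = {s₁,…,s_n} (m_{s_i s_{i+1}} = 3, m_{s_i s_j} = 2 for |i−j| ≥ 2). Then every admissible partition of S is either trivial (one block) or discrete (all blocks singletons). Here a partition S = I₁ ⊔ ⋯ ⊔ I_k is admissible if (1) for all i ≠ j, gcd{m_{rt} : r ∈ I_i, t ∈ I_j, m_{rt} < ∞} > 1, and (2) no block I_i splits as J ⊔ J′ with m_{rt} = ∞ for all r ∈ J, t ∈ J′. -/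
/-!
If a block `B` contains two generators `a ≠ b` but misses a neighbour `m` of `a`, condition (1)
forces every Coxeter entry between `B` and the block of `m` to equal `m_{am} = 3`, because
`gcd(2, 3) = 1`. Hence `b` is a neighbour of `m` as well, i.e. `{a, b} = {m - 1, m + 1}`. Since
`n ≥ 4`, some generator `m'` lies at distance two from `m`; it cannot lie in `B` (its entry with
`m` is `2`), and it cannot lie outside `B` either (its entries with `m ± 1` are `2` and `3`).
So every block with two elements is closed under adjacency in the Dynkin diagram, which is a
connected path: a partition other than the discrete one is trivial.
-/

open SimpleGraph

/-- Condition (1) of an admissible partition; the entry `0` stands for `m_{rt} = ∞`. -/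
def GcdSeparated {ι : Type*} (M : ι → ι → ℕ) (σ : Setoid ι) : Prop :=
  ∀ r t, ¬ σ.r r t → ∃ d : ℕ, 1 < d ∧ ∀ r' t', σ.r r' r → σ.r t' t → M r' t' ≠ 0 → d ∣ M r' t'

theorem eq_of_dvd_of_eq_two_or_three {d x y : ℕ} (hd : 1 < d) (hdx : d ∣ x) (hdy : d ∣ y)
    (hx : x = 2 ∨ x = 3) (hy : y = 2 ∨ y = 3) : x = y := by
  by_contra hxy
  have hcop : Nat.Coprime x y := by
    rcases hx with rfl | rfl <;> rcases hy with rfl | rfl <;>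
      first | exact absurd rfl hxy | norm_num
  exact hd.ne' (Nat.eq_one_of_dvd_coprimes hcop hdx hdy)

theorem CoxeterMatrix.A_eq_two_or_three {n : ℕ} {i j : Fin n} (hij : i ≠ j) :
    CoxeterMatrix.A n i j = 2 ∨ CoxeterMatrix.A n i j = 3 := by
  simp only [CoxeterMatrix.A, Matrix.of_apply, if_neg hij]
  split_ifs <;> simp

namespace GcdSeparated

variable {n : ℕ} {σ : Setoid (Fin n)}

theorem A_eq (h : GcdSeparated (CoxeterMatrix.A n) σ) {r t r' t' : Fin n} (hr : σ.r r' r)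
    (ht : σ.r t' t) (hrt : ¬ σ.r r t) : CoxeterMatrix.A n r' t' = CoxeterMatrix.A n r t := by
  have hoff : ∀ {u v}, σ.r u r → σ.r v t →
      CoxeterMatrix.A n u v = 2 ∨ CoxeterMatrix.A n u v = 3 := fun hu hv =>
    CoxeterMatrix.A_eq_two_or_three fun huv => hrt (σ.trans (σ.symm hu) (huv ▸ hv))
  obtain ⟨d, hd, hdvd⟩ := h r t hrt
  have hdvd' : ∀ {u v}, σ.r u r → σ.r v t → d ∣ CoxeterMatrix.A n u v := fun hu hv =>
    hdvd _ _ hu hv (by rcases hoff hu hv with h | h <;> omega)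
  exact eq_of_dvd_of_eq_two_or_three hd (hdvd' hr ht) (hdvd' (σ.refl r) (σ.refl t))
    (hoff hr ht) (hoff (σ.refl r) (σ.refl t))

theorem rel_of_adj (hn : 4 ≤ n) (h : GcdSeparated (CoxeterMatrix.A n) σ) {a b m : Fin n}
    (hab : σ.r a b) (hne : a ≠ b) (hadj : (pathGraph n).Adj a m) : σ.r a m := by
  by_contra ham
  have hbm := h.A_eq (σ.symm hab) (σ.refl m) ham
  obtain ⟨m', hm'⟩ : ∃ m' : Fin n, (m' : ℕ) = m + 2 ∨ (m : ℕ) = m' + 2 := by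
    by_cases hm : (m : ℕ) + 2 < n
    · exact ⟨⟨m + 2, hm⟩, Or.inl rfl⟩
    · exact ⟨⟨m - 2, by omega⟩, Or.inr (by simp only; omega)⟩
  rw [pathGraph_adj] at hadj
  rw [Ne, Fin.ext_iff] at hne
  by_cases hm'a : σ.r m' a
  · have hm'm := h.A_eq hm'a (σ.refl m) ham
    simp only [CoxeterMatrix.A, Matrix.of_apply, Fin.ext_iff] at hbm hm'm
    split_ifs at hbm hm'm <;> omega
  · have hbm' := h.A_eq (σ.symm hab) (σ.refl m') (fun ham' => hm'a (σ.symm ham'))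
    simp only [CoxeterMatrix.A, Matrix.of_apply, Fin.ext_iff] at hbm hbm'
    split_ifs at hbm hbm' <;> omega

end GcdSeparated

theorem Setoid.eq_top_of_preconnected {V : Type*} {G : SimpleGraph V} (hG : G.Preconnected)
    (σ : Setoid V) (a : V) (h : ∀ x y, σ.r a x → G.Adj x y → σ.r a y) : σ = ⊤ := by
  have hall : ∀ z, σ.r a z := fun z => by
    induction (reachable_iff_reflTransGen a z).1 (hG a z) with
    | refl => exact σ.refl a
    | tail _ hxy ih => exact h _ _ ih hxy
  exact Setoid.eq_top_iff.2 fun x y => σ.trans (σ.symm (hall x)) (hall y)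

theorem stmt17_general (n : ℕ) (hn : 4 ≤ n) (M : Fin n → Fin n → ℕ)
    (hM : ∀ i j : Fin n, M i j = if i = j then 1
      else if (i : ℕ) + 1 = (j : ℕ) ∨ (j : ℕ) + 1 = (i : ℕ) then 3 else 2)
    (σ : Setoid (Fin n))
    (h1 : ∀ r t : Fin n, ¬ σ.r r t →
      ∃ d : ℕ, 1 < d ∧ ∀ r' t' : Fin n, σ.r r' r → σ.r t' t → M r' t' ≠ 0 → d ∣ M r' t') :
    σ = ⊤ ∨ σ = ⊥ := by
  obtain rfl : M = CoxeterMatrix.A n := funext₂ fun i j => by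
    simp [hM, CoxeterMatrix.A, or_comm]
  have h : GcdSeparated (CoxeterMatrix.A n) σ := h1
  rcases eq_or_ne σ ⊥ with hbot | hbot
  · exact Or.inr hbot
  obtain ⟨a, b, hab, hne⟩ : ∃ a b, σ.r a b ∧ a ≠ b := by
    contrapose! hbot
    exact le_bot_iff.1 fun x y hxy => hbot x y hxy
  refine Or.inl <|
    Setoid.eq_top_of_preconnected (pathGraph_preconnected n) σ a fun x y hax hxy => ?_
  obtain ⟨c, hxc, hxc'⟩ : ∃ c, σ.r x c ∧ x ≠ c := by
    by_cases hxa : x = a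
    · exact ⟨b, hxa ▸ hab, hxa ▸ hne⟩
    · exact ⟨a, σ.symm hax, hxa⟩
  exact σ.trans hax (h.rel_of_adj hn hxc hxc' hxy)

/-- For the symmetric group `𝔖_{n+1}` (`n ≥ 4`) with its standard Coxeter
generators `s_1, …, s_n`, every admissible partition of `S` (modelled as a
setoid) is either trivial (one block, `σ = ⊤`) or discrete (all singletons,
`σ = ⊥`).  Condition (1): for generators in different blocks, some `d > 1`
divides all the finite Coxeter matrix entries between the blocks (`M r t = 0`
encodes `m_{rt} = ∞`).  Condition (2): no block splits into two nonempty parts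
with all entries between them infinite. -/
theorem stmt17 (n : ℕ) (hn : 4 ≤ n) (M : Fin n → Fin n → ℕ)
    (hM : ∀ i j : Fin n, M i j = if i = j then 1
      else if (i : ℕ) + 1 = (j : ℕ) ∨ (j : ℕ) + 1 = (i : ℕ) then 3 else 2)
    (σ : Setoid (Fin n))
    (h1 : ∀ r t : Fin n, ¬ σ.r r t →
      ∃ d : ℕ, 1 < d ∧ ∀ r' t' : Fin n, σ.r r' r → σ.r t' t → M r' t' ≠ 0 → d ∣ M r' t')
    (h2 : ∀ r : Fin n, ¬ ∃ J J' : Set (Fin n), J.Nonempty ∧ J'.Nonempty ∧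
      Disjoint J J' ∧ J ∪ J' = {u | σ.r u r} ∧ ∀ u ∈ J, ∀ v ∈ J', M u v = 0) :
    σ = ⊤ ∨ σ = ⊥ :=
  stmt17_general n hn M hM σ h1
end
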